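/- Let M₁ and M₂ be almost contact manifolds with structure tensors (φ₁, ξ₁, η₁) and (φ₂, ξ₂, η₂) respectively. Then the endomorphism J of T(M₁ × M₂) defined by J(X, Y) = ( φ₁(X) − η₂(Y)ξ₁, φ₂(Y) + η₁(X)ξ₂ ) for X ∈ TM₁, Y ∈ TM₂ satisfies J ∘ J = −id; hence M₁ × M₂ admits an almost complex structure induced by the almost contact structures of M₁ and M₂. -/

import Mathlib

/-!
Abstract differential-geometric framework for the statements of
"Hermitian non-Kähler structures on products of principal S¹-bundles over
complex flag manifolds and applications in Hermitian geometry with torsion"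
(arXiv:1803.09170).

Mathlib does not yet provide differential forms on manifolds, principal
bundles, almost contact structures, nor the Lie theory of parabolic
subgroups.  We therefore work with an axiomatised notion of smooth manifold:
a topological space of points together with a tangent space at each point
and the basic differential-geometric operators (Lie bracket of vector
fields, exterior derivative `d`, the operator `d^c = √-1(∂̄ - ∂)` of the
underlying complex structure, wedge product, and directional derivative of
functions), given as data.  Tensor fields are given pointwise.  The
Lie-theoretic data attached to a complex flag manifold `X_P = G^ℂ/P_Θ`
(simple roots `Σ`, the painted subset `Θ`, fundamental weights `ω_α`,
coroot pairings `⟨·, h_α^∨⟩`, positive roots, the holomorphic line bundles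
`L_{χ_μ}`, their unit circle bundles `Q(μ)`, Chern and Euler classes, the
closed invariant real (1,1)-forms `Ω_α` with
`π*Ω_α = (√-1/2π) ∂∂̄ log ‖g v_{ω_α}^+‖²`, the canonical bundle and the
invariant Kähler–Einstein form `ρ₀ = √-1 ∂∂̄ log ‖s_U v_{δ_P}^+‖²`)
is likewise given axiomatically, in the structure `FlagMfld`.
-/

noncomputable section

universe u

namespace Paper

/-- An (axiomatised) smooth manifold. -/
structure Mfld : Type (u + 1) where
  Pt : Type u
  [top : TopologicalSpace Pt]
  Tp : Pt → Type u
  [grp : ∀ p, AddCommGroup (Tp p)]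
  [mod : ∀ p, Module ℝ (Tp p)]
  /-- Lie bracket of (smooth) vector fields -/
  lie : (∀ p, Tp p) → (∀ p, Tp p) → ∀ p, Tp p
  /-- derivative of a (smooth) function along a vector field -/
  vact : (∀ p, Tp p) → (Pt → ℝ) → Pt → ℝ
  /-- exterior derivative -/
  d : ∀ {k : ℕ}, (∀ p, AlternatingMap ℝ (Tp p) ℝ (Fin k)) →
      ∀ p, AlternatingMap ℝ (Tp p) ℝ (Fin (k + 1))
  /-- the operator `d^c = √-1(∂̄ - ∂)` of the underlying complex structure -/
  dc : ∀ {k : ℕ}, (∀ p, AlternatingMap ℝ (Tp p) ℝ (Fin k)) →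
      ∀ p, AlternatingMap ℝ (Tp p) ℝ (Fin (k + 1))
  /-- wedge product of differential forms -/
  wedge : ∀ {k l : ℕ}, (∀ p, AlternatingMap ℝ (Tp p) ℝ (Fin k)) →
      (∀ p, AlternatingMap ℝ (Tp p) ℝ (Fin l)) →
      ∀ p, AlternatingMap ℝ (Tp p) ℝ (Fin (k + l))

attribute [instance] Mfld.top Mfld.grp Mfld.mod

/-- Vector fields. -/
abbrev VF (M : Mfld) : Type u := ∀ p, M.Tp p

/-- Differential `k`-forms. -/
abbrev Form (M : Mfld) (k : ℕ) : Type u :=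
  ∀ p, AlternatingMap ℝ (M.Tp p) ℝ (Fin k)

/-- (1,1)-tensor fields (endomorphism fields of the tangent bundle). -/
abbrev EndT (M : Mfld) : Type u := ∀ p, M.Tp p →ₗ[ℝ] M.Tp p

/-- Symmetric 2-tensor fields / candidate Riemannian metrics. -/
abbrev Metric (M : Mfld) : Type u := ∀ p, M.Tp p →ₗ[ℝ] M.Tp p →ₗ[ℝ] ℝ

/-- Evaluation of a 1-form on a vector field. -/
def ev1 {M : Mfld} (η : Form M 1) (X : VF M) : M.Pt → ℝ := fun p => η p ![X p]

/-- Application of a (1,1)-tensor field to a vector field. -/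
def tapp {M : Mfld} (φ : EndT M) (X : VF M) : VF M := fun p => φ p (X p)

/-- A function regarded as a 0-form (so that `M.d (fn0 M f)` is `df`). -/
def fn0 (M : Mfld) (f : M.Pt → ℝ) : Form M 0 :=
  fun p => AlternatingMap.constOfIsEmpty ℝ (M.Tp p) (Fin 0) (f p)

/-- The Nijenhuis torsion `[φ, φ]` of a (1,1)-tensor field `φ`. -/
def nijenhuis (M : Mfld) (φ : EndT M) (X Y : VF M) : VF M :=
  tapp φ (tapp φ (M.lie X Y)) + M.lie (tapp φ X) (tapp φ Y)
    - tapp φ (M.lie (tapp φ X) Y) - tapp φ (M.lie X (tapp φ Y))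

/-- An almost contact structure: `φ∘φ = -id + η ⊗ ξ` and `η(ξ) = 1`. -/
structure IsAlmostContact (M : Mfld) (φ : EndT M) (ξ : VF M) (η : Form M 1) : Prop where
  phi_sq : ∀ (p : M.Pt) (v : M.Tp p), φ p (φ p v) = -v + η p ![v] • ξ p
  eta_xi : ∀ p : M.Pt, η p ![ξ p] = 1

/-- Normality of an almost contact structure: `[φ, φ] + dη ⊗ ξ = 0`. -/
def IsNormalACS (M : Mfld) (φ : EndT M) (ξ : VF M) (η : Form M 1) : Prop :=
  ∀ (X Y : VF M) (p : M.Pt),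
    nijenhuis M φ X Y p + (M.d η) p ![X p, Y p] • ξ p = 0

/-- An almost complex structure: `J ∘ J = -id`. -/
def IsAlmostComplex (M : Mfld) (J : EndT M) : Prop :=
  ∀ (p : M.Pt) (v : M.Tp p), J p (J p v) = -v

/-- Integrability of an almost complex structure: the Nijenhuis tensor
`[J, J]` vanishes. -/
def IsIntegrable (M : Mfld) (J : EndT M) : Prop :=
  ∀ X Y : VF M, nijenhuis M J X Y = 0

/-- Riemannian metrics. -/
structure IsRiemannianMetric (M : Mfld) (g : Metric M) : Prop where
  symm : ∀ (p : M.Pt) (u v : M.Tp p), g p u v = g p v u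
  posdef : ∀ (p : M.Pt) (v : M.Tp p), v ≠ 0 → 0 < g p v v

/-- `ξ` is a Killing field for `g`: `𝓛_ξ g = 0`. -/
def IsKillingField (M : Mfld) (g : Metric M) (ξ : VF M) : Prop :=
  ∀ (X Y : VF M) (p : M.Pt),
    M.vact ξ (fun q => g q (X q) (Y q)) p
      = g p (M.lie ξ X p) (Y p) + g p (X p) (M.lie ξ Y p)

/-- A Hermitian structure: an integrable complex structure together with a
compatible Riemannian metric. -/
structure IsHermitian (M : Mfld) (J : EndT M) (g : Metric M) : Prop where
  cplx : IsAlmostComplex M J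
  integrable : IsIntegrable M J
  metric : IsRiemannianMetric M g
  compat : ∀ (p : M.Pt) (u v : M.Tp p), g p (J p u) (J p v) = g p u v

/-- `Ω` is the fundamental 2-form `Ω = g(J ⊗ id)`. -/
def IsFundamentalForm (M : Mfld) (J : EndT M) (g : Metric M) (Ω : Form M 2) : Prop :=
  ∀ (p : M.Pt) (u v : M.Tp p), Ω p ![u, v] = g p (J p u) v

/-- A contact metric structure. -/
structure IsContactMetric (M : Mfld) (φ : EndT M) (ξ : VF M) (η : Form M 1)
    (g : Metric M) : Prop where
  acs : IsAlmostContact M φ ξ η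
  metric : IsRiemannianMetric M g
  compat : ∀ (p : M.Pt) (u v : M.Tp p),
    g p (φ p u) (φ p v) = g p u v - η p ![u] * η p ![v]
  deta : ∀ (p : M.Pt) (u v : M.Tp p), (M.d η) p ![u, v] = 2 * g p (φ p u) v

/-- A Sasaki structure: a contact metric structure which is normal and whose
Reeb field is Killing. -/
def IsSasaki (M : Mfld) (φ : EndT M) (ξ : VF M) (η : Form M 1) (g : Metric M) : Prop :=
  IsContactMetric M φ ξ η g ∧ IsNormalACS M φ ξ η ∧ IsKillingField M g ξ

/-- An affine connection on the tangent bundle. -/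
structure AffConn (M : Mfld) where
  cov : VF M → VF M → VF M
  add_left : ∀ X Y Z, cov (X + Y) Z = cov X Z + cov Y Z
  add_right : ∀ X Y Z, cov X (Y + Z) = cov X Y + cov X Z
  smul_left : ∀ (f : M.Pt → ℝ) (X Y : VF M) (p : M.Pt),
    cov (fun q => f q • X q) Y p = f p • cov X Y p
  leibniz : ∀ (f : M.Pt → ℝ) (X Y : VF M) (p : M.Pt),
    cov X (fun q => f q • Y q) p = M.vact X f p • Y p + f p • cov X Y p

/-- Torsion of an affine connection. -/
def torsion (M : Mfld) (D : AffConn M) (X Y : VF M) : VF M :=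
  D.cov X Y - D.cov Y X - M.lie X Y

/-- Curvature `R(X,Y)Z` of an affine connection. -/
def curv (M : Mfld) (D : AffConn M) (X Y Z : VF M) : VF M :=
  D.cov X (D.cov Y Z) - D.cov Y (D.cov X Z) - D.cov (M.lie X Y) Z

/-- `∇ g = 0`. -/
def MetricCompatible (M : Mfld) (D : AffConn M) (g : Metric M) : Prop :=
  ∀ (X Y Z : VF M) (p : M.Pt),
    M.vact X (fun q => g q (Y q) (Z q)) p
      = g p (D.cov X Y p) (Z p) + g p (Y p) (D.cov X Z p)

/-- `∇ J = 0`. -/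
def ParallelEnd (M : Mfld) (D : AffConn M) (J : EndT M) : Prop :=
  ∀ X Y : VF M, D.cov X (tapp J Y) = tapp J (D.cov X Y)

/-- The Levi-Civita connection of `g`. -/
def IsLeviCivita (M : Mfld) (D : AffConn M) (g : Metric M) : Prop :=
  MetricCompatible M D g ∧ ∀ X Y, torsion M D X Y = 0

/-- `∇` is the Bismut (KT) connection of the Hermitian structure `(g, J)`
with fundamental form `Ω`: it is Hermitian (`∇g = 0`, `∇J = 0`) and its
torsion satisfies `g(T(X,Y),Z) = dΩ(JX,JY,JZ)`. -/
def IsBismutConn (M : Mfld) (J : EndT M) (g : Metric M) (Ω : Form M 2)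
    (D : AffConn M) : Prop :=
  MetricCompatible M D g ∧ ParallelEnd M D J ∧
  ∀ (X Y Z : VF M) (p : M.Pt),
    g p (torsion M D X Y p) (Z p)
      = (M.d Ω) p ![J p (X p), J p (Y p), J p (Z p)]

/-- The restricted holonomy group of the Hermitian connection `∇` is
contained in `SU(n)`; equivalently, its Ricci form
`ρ^∇(X,Y) = ½ tr(J ∘ R^∇(X,Y))` vanishes (the connection induced on the
canonical bundle is flat). -/
def RestrictedHolInSU (M : Mfld) (J : EndT M) (D : AffConn M) : Prop :=
  ∃ R : ∀ p, M.Tp p →ₗ[ℝ] M.Tp p →ₗ[ℝ] M.Tp p →ₗ[ℝ] M.Tp p,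
    (∀ (X Y Z : VF M) (p : M.Pt), R p (X p) (Y p) (Z p) = curv M D X Y Z p) ∧
    (∀ (p : M.Pt) (u v : M.Tp p),
      LinearMap.trace ℝ (M.Tp p) ((J p).comp (R p u v)) = 0)

/-- Wedge powers `ω^n` of a 2-form. -/
def wpow (M : Mfld) (ω : Form M 2) : (n : ℕ) → Form M (2 * n)
  | 0 => fun p => AlternatingMap.constOfIsEmpty ℝ (M.Tp p) (Fin 0) 1
  | n + 1 => M.wedge (wpow M ω n) ω

/-- A Hermitian manifold of complex dimension `n` with fundamental 2-form `Ω`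
is astheno-Kähler if `d d^c Ω^{n-2} = 0`. -/
def IsAsthenoKahler (M : Mfld) (Ω : Form M 2) (n : ℕ) : Prop :=
  M.d (M.dc (wpow M Ω (n - 2))) = 0

/-- A smooth map, with its differential. -/
structure SMap (M N : Mfld) where
  toFun : M.Pt → N.Pt
  cont : Continuous toFun
  diff : ∀ p, M.Tp p →ₗ[ℝ] N.Tp (toFun p)

/-- Pullback of differential forms. -/
def pbForm {M N : Mfld} (f : SMap M N) {k : ℕ} (ω : Form N k) : Form M k :=
  fun p => (ω (f.toFun p)).compLinearMap (f.diff p)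

/-- A map between (almost) complex manifolds is holomorphic iff its
differential intertwines the complex structures. -/
def IsHolomorphicMap {M N : Mfld} (f : SMap M N) (J : EndT M) (J' : EndT N) : Prop :=
  ∀ (p : M.Pt) (v : M.Tp p), f.diff p (J p v) = J' (f.toFun p) (f.diff p v)

/-- A principal U(1)-bundle (abstracted): a surjective submersion together
with the fundamental vertical vector field `ξ = ∂/∂θ` generated by the
circle action, and such that pullback of forms commutes with `d`. -/
structure PrincipalS1 (Q X : Mfld) where
  π : SMap Q X
  ξ : VF Q
  vertical : ∀ p, π.diff p (ξ p) = 0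
  diff_surj : ∀ p, Function.Surjective (π.diff p)
  surj : Function.Surjective π.toFun
  nat : ∀ {k : ℕ} (ω : Form X k), Q.d (pbForm π ω) = pbForm π (X.d ω)

/-- (The real form `η` of) a principal connection `√-1·η ∈ Ω¹(Q; 𝔲(1))`:
`η(ξ) = 1` and `η` is invariant under the circle action. -/
structure ConnOn {Q X : Mfld} (B : PrincipalS1 Q X) where
  η : Form Q 1
  normalized : ∀ p, η p ![B.ξ p] = 1
  invariant : ∀ Z : VF Q, Q.vact B.ξ (ev1 η Z) = ev1 η (Q.lie B.ξ Z)

/-- A realization of the manifold `P` as the product `M × N`. -/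
structure ProductOf (P M N : Mfld) where
  pr₁ : SMap P M
  pr₂ : SMap P N
  split : ∀ p : P.Pt,
    Function.Bijective fun v : P.Tp p => (pr₁.diff p v, pr₂.diff p v)
  surj : Function.Surjective fun p => (pr₁.toFun p, pr₂.toFun p)
  nat₁ : ∀ {k : ℕ} (ω : Form M k), P.d (pbForm pr₁ ω) = pbForm pr₁ (M.d ω)
  nat₂ : ∀ {k : ℕ} (ω : Form N k), P.d (pbForm pr₂ ω) = pbForm pr₂ (N.d ω)

/-- Morimoto's almost complex structure
`J(X,Y) = (φ₁(X) - η₂(Y)ξ₁, φ₂(Y) + η₁(X)ξ₂)` on a product of two almost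
contact manifolds, characterised through the two projections. -/
def MorimotoJ {M₁ M₂ P : Mfld} (PR : ProductOf P M₁ M₂)
    (φ₁ : EndT M₁) (ξ₁ : VF M₁) (η₁ : Form M₁ 1)
    (φ₂ : EndT M₂) (ξ₂ : VF M₂) (η₂ : Form M₂ 1) (J : EndT P) : Prop :=
  ∀ (p : P.Pt) (v : P.Tp p),
    PR.pr₁.diff p (J p v)
        = φ₁ (PR.pr₁.toFun p) (PR.pr₁.diff p v)
          - η₂ (PR.pr₂.toFun p) ![PR.pr₂.diff p v] • ξ₁ (PR.pr₁.toFun p)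
    ∧ PR.pr₂.diff p (J p v)
        = φ₂ (PR.pr₂.toFun p) (PR.pr₂.diff p v)
          + η₁ (PR.pr₁.toFun p) ![PR.pr₁.diff p v] • ξ₂ (PR.pr₂.toFun p)

/-- Tsukada's complex structure
`J_{a,b} = φ₁ - ((a/b)η₁ + ((a²+b²)/b)η₂) ⊗ ξ₁ + φ₂ + ((1/b)η₁ + (a/b)η₂) ⊗ ξ₂`. -/
def TsukadaJ {Q₁ Q₂ P : Mfld} (PR : ProductOf P Q₁ Q₂)
    (φ₁ : EndT Q₁) (ξ₁ : VF Q₁) (η₁ : Form Q₁ 1)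
    (φ₂ : EndT Q₂) (ξ₂ : VF Q₂) (η₂ : Form Q₂ 1) (a b : ℝ) (J : EndT P) : Prop :=
  ∀ (p : P.Pt) (v : P.Tp p),
    PR.pr₁.diff p (J p v)
        = φ₁ (PR.pr₁.toFun p) (PR.pr₁.diff p v)
          - ((a / b) * η₁ (PR.pr₁.toFun p) ![PR.pr₁.diff p v]
              + ((a ^ 2 + b ^ 2) / b) * η₂ (PR.pr₂.toFun p) ![PR.pr₂.diff p v])
            • ξ₁ (PR.pr₁.toFun p)
    ∧ PR.pr₂.diff p (J p v)
        = φ₂ (PR.pr₂.toFun p) (PR.pr₂.diff p v)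
          + ((1 / b) * η₁ (PR.pr₁.toFun p) ![PR.pr₁.diff p v]
              + (a / b) * η₂ (PR.pr₂.toFun p) ![PR.pr₂.diff p v])
            • ξ₂ (PR.pr₂.toFun p)

/-- Tsukada's Hermitian metric
`g_{a,b} = g₁ + g₂ + a(η₁⊗η₂ + η₂⊗η₁) + (a²+b²-1) η₂⊗η₂`. -/
def TsukadaMetric {Q₁ Q₂ P : Mfld} (PR : ProductOf P Q₁ Q₂)
    (η₁ : Form Q₁ 1) (η₂ : Form Q₂ 1) (g₁ : Metric Q₁) (g₂ : Metric Q₂)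
    (a b : ℝ) (g : Metric P) : Prop :=
  ∀ (p : P.Pt) (u v : P.Tp p),
    g p u v
      = g₁ (PR.pr₁.toFun p) (PR.pr₁.diff p u) (PR.pr₁.diff p v)
        + g₂ (PR.pr₂.toFun p) (PR.pr₂.diff p u) (PR.pr₂.diff p v)
        + a * (η₁ (PR.pr₁.toFun p) ![PR.pr₁.diff p u]
                * η₂ (PR.pr₂.toFun p) ![PR.pr₂.diff p v]
              + η₂ (PR.pr₂.toFun p) ![PR.pr₂.diff p u]
                * η₁ (PR.pr₁.toFun p) ![PR.pr₁.diff p v])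
        + (a ^ 2 + b ^ 2 - 1) * (η₂ (PR.pr₂.toFun p) ![PR.pr₂.diff p u]
                * η₂ (PR.pr₂.toFun p) ![PR.pr₂.diff p v])

/-- The fundamental 2-form `Ω_{a,b} = ½(dη₁ + dη₂) + b·η₁ ∧ η₂` on the
product, characterised pointwise. -/
def TsukadaFund {Q₁ Q₂ P : Mfld} (PR : ProductOf P Q₁ Q₂)
    (η₁ : Form Q₁ 1) (η₂ : Form Q₂ 1) (b : ℝ) (Ω : Form P 2) : Prop :=
  ∀ (p : P.Pt) (u v : P.Tp p),
    Ω p ![u, v]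
      = (1 / 2) * ((Q₁.d η₁) (PR.pr₁.toFun p) ![PR.pr₁.diff p u, PR.pr₁.diff p v]
            + (Q₂.d η₂) (PR.pr₂.toFun p) ![PR.pr₂.diff p u, PR.pr₂.diff p v])
        + b * (η₁ (PR.pr₁.toFun p) ![PR.pr₁.diff p u]
                * η₂ (PR.pr₂.toFun p) ![PR.pr₂.diff p v]
              - η₁ (PR.pr₁.toFun p) ![PR.pr₁.diff p v]
                * η₂ (PR.pr₂.toFun p) ![PR.pr₂.diff p u])

/-- A homogeneous contact manifold: a (Lie) group `G` acting transitively
and effectively by diffeomorphisms preserving the contact form `η`. -/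
structure IsHomogeneousContact (M : Mfld) {G : Type u} [Group G]
    (act : G → SMap M M) (η : Form M 1) : Prop where
  act_one : ∀ p, (act 1).toFun p = p
  act_mul : ∀ γ δ p, (act (γ * δ)).toFun p = (act γ).toFun ((act δ).toFun p)
  transitive : ∀ p q : M.Pt, ∃ γ, (act γ).toFun p = q
  effective : ∀ γ, (∀ p, (act γ).toFun p = p) → γ = 1
  preserves : ∀ γ, pbForm (act γ) η = η

/-- A homogeneous Sasaki manifold: a group acting transitively and
effectively by isometries preserving all structure tensors. -/
structure IsHomogeneousSasaki (M : Mfld) {G : Type u} [Group G]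
    (act : G → SMap M M) (φ : EndT M) (ξ : VF M) (η : Form M 1)
    (g : Metric M) : Prop where
  act_one : ∀ p, (act 1).toFun p = p
  act_mul : ∀ γ δ p, (act (γ * δ)).toFun p = (act γ).toFun ((act δ).toFun p)
  transitive : ∀ p q : M.Pt, ∃ γ, (act γ).toFun p = q
  effective : ∀ γ, (∀ p, (act γ).toFun p = p) → γ = 1
  preserves_η : ∀ γ, pbForm (act γ) η = η
  preserves_g : ∀ γ p u v,
    g ((act γ).toFun p) ((act γ).diff p u) ((act γ).diff p v) = g p u v
  equivariant_φ : ∀ γ p v,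
    (act γ).diff p (φ p v) = φ ((act γ).toFun p) ((act γ).diff p v)
  equivariant_ξ : ∀ γ p, (act γ).diff p (ξ p) = ξ ((act γ).toFun p)

/-- The (axiomatised) data of a complex flag manifold `X_P = G^ℂ/P_Θ`
associated to a parabolic subgroup `P_Θ` of a connected, simply connected
complex simple Lie group `G^ℂ` with compact real form `G`, together with the
Lie-theoretic objects attached to it in the paper. -/
structure FlagMfld : Type (u + 1) where
  /-- the underlying manifold `X_P` -/
  M : Mfld.{u}
  [cpt : CompactSpace M.Pt]
  [sc : SimplyConnectedSpace M.Pt]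
  /-- the simple roots `Σ` -/
  roots : Type u
  [rootsFT : Fintype roots]
  [rootsDE : DecidableEq roots]
  /-- the subset `Θ ⊆ Σ` determining the parabolic subgroup `P = P_Θ` -/
  Θ : Finset roots
  /-- the weight lattice -/
  wt : Type u
  [wtGrp : AddCommGroup wt]
  [wtDE : DecidableEq wt]
  /-- the fundamental weights `ω_α` -/
  fw : roots → wt
  /-- the coroot pairing `μ ↦ ⟨μ, h_α^∨⟩` -/
  pair : roots → wt →+ ℤ
  pair_fw : ∀ α β, pair α (fw β) = if β = α then 1 else 0
  /-- the positive roots `Π⁺` (as weights) -/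
  posRoots : Finset wt
  /-- the positive roots `⟨Θ⟩⁺` generated by `Θ` -/
  ΘposRoots : Finset wt
  Θpos_sub : ΘposRoots ⊆ posRoots
  /-- the canonical invariant complex structure `J₀` of `X_P` -/
  J₀ : EndT M
  J₀_cplx : IsAlmostComplex M J₀
  J₀_int : IsIntegrable M J₀
  /-- the Picard group (written additively: `+` = tensor product) -/
  Pic : Type u
  [PicGrp : AddCommGroup Pic]
  /-- `μ ↦ L_{χ_μ} = G^ℂ ×_{χ_μ} ℂ_{-μ}` -/
  Lw : wt →+ Pic
  /-- `H²(X_P, ℤ)` -/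
  H2 : Type u
  [H2Grp : AddCommGroup H2]
  /-- the first Chern class -/
  c1 : Pic →+ H2
  /-- the group `𝒫(X_P, U(1))` of isomorphism classes of principal
  U(1)-bundles over `X_P` (with `Q₁ + Q₂ = Q(L(Q₁) ⊗ L(Q₂))`) -/
  PB : Type u
  [PBGrp : AddCommGroup PB]
  /-- the Euler class -/
  e : PB →+ H2
  /-- `L ↦ Q(L)`, the isomorphism class of the unit circle bundle of `L` -/
  QofL : Pic →+ PB
  e_QofL : ∀ L, e (QofL L) = c1 L
  /-- the closed invariant real (1,1)-forms `Ω_α` with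
  `π*Ω_α = (√-1/2π) ∂∂̄ log ‖g v_{ω_α}^+‖²`, `v_{ω_α}^+` the highest weight
  vector of the fundamental irreducible module `V(ω_α)` -/
  ΩForm : roots → Form M 2
  ΩForm_closed : ∀ α, M.d (ΩForm α) = 0
  /-- the cohomology class `[Ω_α] ∈ H²(X_P, ℤ)` -/
  ΩCls : roots → H2
  /-- ampleness of holomorphic line bundles -/
  ample : Pic → Prop
  /-- the canonical bundle `K_{X_P}` -/
  K : Pic
  /-- the invariant Kähler–Einstein form
  `ρ₀ = √-1 ∂∂̄ log ‖s_U v_{δ_P}^+‖²` (normalised by `Ric(ρ₀) = ρ₀`),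
  `v_{δ_P}^+` the highest weight vector of the irreducible module `V(δ_P)` -/
  ρ₀ : Form M 2
  ρ₀_closed : M.d ρ₀ = 0
  ρ₀_compat : ∀ (p : M.Pt) (u v : M.Tp p), ρ₀ p ![J₀ p u, J₀ p v] = ρ₀ p ![u, v]
  ρ₀_pos : ∀ (p : M.Pt) (v : M.Tp p), v ≠ 0 → 0 < ρ₀ p ![v, J₀ p v]
  /-- the total space of the unit circle bundle `Q(L)` of `L ∈ Pic(X_P)` -/
  Qb : Pic → Mfld.{u}
  /-- the principal U(1)-bundle structure `Q(L) → X_P` -/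
  QbBundle : ∀ L, PrincipalS1 (Qb L) M

attribute [instance] FlagMfld.cpt FlagMfld.sc FlagMfld.rootsFT FlagMfld.rootsDE
  FlagMfld.wtGrp FlagMfld.wtDE FlagMfld.PicGrp FlagMfld.H2Grp FlagMfld.PBGrp

/-- `δ_P = Σ_{α ∈ Π⁺\⟨Θ⟩⁺} α`. -/
def FlagMfld.δP (F : FlagMfld) : F.wt := ∑ β ∈ F.posRoots \ F.ΘposRoots, β

/-- `I` is the Fano index of `X_P`: the largest positive integer such that
the anticanonical bundle `K_{X_P}^{-1}` admits an `I`-th root in `Pic(X_P)`. -/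
def IsFanoIndex (F : FlagMfld) (I : ℕ) : Prop :=
  IsGreatest {d : ℕ | 0 < d ∧ ∃ c : F.Pic, d • c = -F.K} I

end Paper

/-!
Pointwise, `(φ, ξ, η)` is linear algebra: from `φ² = -1 + η ⊗ ξ` and `η(ξ) = 1` one gets
`φ ξ = 0` and `η ∘ φ = 0`, and with these the four cross terms of `J²` cancel in pairs, leaving
`J² = -1` on `V₁ × V₂`. The splitting `T_p P ≅ T M₁ × T M₂` then transports this endomorphism
to `P`, and characterises Morimoto's `J` as its conjugate.
-/

namespace Module.End

variable {K V V₁ V₂ : Type*} [CommRing K]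
  [AddCommGroup V] [Module K V] [AddCommGroup V₁] [Module K V₁] [AddCommGroup V₂] [Module K V₂]

structure IsAlmostContact (φ : Module.End K V) (ξ : V) (η : Module.Dual K V) : Prop where
  apply_apply : ∀ v, φ (φ v) = -v + η v • ξ
  dual_apply_self : η ξ = 1

namespace IsAlmostContact

variable [NoZeroDivisors K] {φ : Module.End K V} {ξ : V} {η : Module.Dual K V}

theorem apply_self_eq_zero (h : IsAlmostContact φ ξ η) : φ ξ = 0 := by
  have hsq : φ (φ ξ) = 0 := by rw [h.apply_apply, h.dual_apply_self, one_smul, neg_add_cancel]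
  set c := η (φ ξ)
  have hφξ : φ ξ = c • ξ := by
    have h₃ := h.apply_apply (φ ξ)
    rw [hsq, map_zero] at h₃
    linear_combination (norm := module) h₃
  -- `c` is nilpotent: `0 = φ² ξ = c² ξ`.
  have hc : c * c = 0 := by
    have h₂ := congrArg η (congrArg φ hφξ)
    rwa [hsq, map_smul, hφξ, smul_smul, map_zero, map_smul, h.dual_apply_self, smul_eq_mul,
      mul_one, eq_comm] at h₂
  rw [hφξ, mul_self_eq_zero.mp hc, zero_smul]

theorem dual_apply_apply_eq_zero (h : IsAlmostContact φ ξ η) (v : V) : η (φ v) = 0 := by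
  have h₃ : φ (φ (φ v)) = -φ v := by
    rw [h.apply_apply v, map_add, map_neg, map_smul, h.apply_self_eq_zero, smul_zero, add_zero]
  have h₂ := congrArg η (h.apply_apply (φ v))
  rwa [h₃, map_add, map_smul, h.dual_apply_self, smul_eq_mul, mul_one, left_eq_add] at h₂

end IsAlmostContact

def morimoto (φ₁ : Module.End K V₁) (ξ₁ : V₁) (η₁ : Module.Dual K V₁)
    (φ₂ : Module.End K V₂) (ξ₂ : V₂) (η₂ : Module.Dual K V₂) : Module.End K (V₁ × V₂) :=
  (φ₁ ∘ₗ LinearMap.fst K V₁ V₂ - (η₂ ∘ₗ LinearMap.snd K V₁ V₂).smulRight ξ₁).prod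
    (φ₂ ∘ₗ LinearMap.snd K V₁ V₂ + (η₁ ∘ₗ LinearMap.fst K V₁ V₂).smulRight ξ₂)

@[simp]
theorem morimoto_apply (φ₁ : Module.End K V₁) (ξ₁ : V₁) (η₁ : Module.Dual K V₁)
    (φ₂ : Module.End K V₂) (ξ₂ : V₂) (η₂ : Module.Dual K V₂) (w : V₁ × V₂) :
    morimoto φ₁ ξ₁ η₁ φ₂ ξ₂ η₂ w = (φ₁ w.1 - η₂ w.2 • ξ₁, φ₂ w.2 + η₁ w.1 • ξ₂) :=
  rfl

theorem IsAlmostContact.morimoto_apply_apply [NoZeroDivisors K]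
    {φ₁ : Module.End K V₁} {ξ₁ : V₁} {η₁ : Module.Dual K V₁}
    {φ₂ : Module.End K V₂} {ξ₂ : V₂} {η₂ : Module.Dual K V₂}
    (h₁ : IsAlmostContact φ₁ ξ₁ η₁) (h₂ : IsAlmostContact φ₂ ξ₂ η₂) (w : V₁ × V₂) :
    morimoto φ₁ ξ₁ η₁ φ₂ ξ₂ η₂ (morimoto φ₁ ξ₁ η₁ φ₂ ξ₂ η₂ w) = -w := by
  simp only [morimoto_apply, map_sub, map_add, map_smul, h₁.apply_apply, h₂.apply_apply,
    h₁.apply_self_eq_zero, h₂.apply_self_eq_zero, h₁.dual_apply_apply_eq_zero,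
    h₂.dual_apply_apply_eq_zero, h₁.dual_apply_self, h₂.dual_apply_self]
  ext <;> simp only [Prod.fst_neg, Prod.snd_neg] <;> module

end Module.End

namespace Paper

def Form.toDual {M : Mfld} (η : Form M 1) (p : M.Pt) : Module.Dual ℝ (M.Tp p) :=
  (AlternatingMap.ofSubsingleton ℝ (M.Tp p) ℝ (0 : Fin 1)).symm (η p)

@[simp]
theorem Form.toDual_apply {M : Mfld} (η : Form M 1) (p : M.Pt) (v : M.Tp p) :
    η.toDual p v = η p ![v] := by
  rw [Matrix.vec_single_eq_const]
  rfl

theorem IsAlmostContact.isAlmostContact_at {M : Mfld} {φ : EndT M} {ξ : VF M} {η : Form M 1}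
    (h : IsAlmostContact M φ ξ η) (p : M.Pt) :
    Module.End.IsAlmostContact (φ p) (ξ p) (η.toDual p) where
  apply_apply v := by rw [Form.toDual_apply, h.phi_sq]
  dual_apply_self := by rw [Form.toDual_apply, h.eta_xi]

namespace ProductOf

variable {P M₁ M₂ : Mfld} (PR : ProductOf P M₁ M₂)

def tangentEquiv (p : P.Pt) : P.Tp p ≃ₗ[ℝ] M₁.Tp (PR.pr₁.toFun p) × M₂.Tp (PR.pr₂.toFun p) :=
  LinearEquiv.ofBijective ((PR.pr₁.diff p).prod (PR.pr₂.diff p)) (PR.split p)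

@[simp]
theorem tangentEquiv_apply (p : P.Pt) (v : P.Tp p) :
    PR.tangentEquiv p v = (PR.pr₁.diff p v, PR.pr₂.diff p v) :=
  rfl

variable (φ₁ : EndT M₁) (ξ₁ : VF M₁) (η₁ : Form M₁ 1) (φ₂ : EndT M₂) (ξ₂ : VF M₂) (η₂ : Form M₂ 1)

def morimotoAt (p : P.Pt) : Module.End ℝ (M₁.Tp (PR.pr₁.toFun p) × M₂.Tp (PR.pr₂.toFun p)) :=
  Module.End.morimoto (φ₁ (PR.pr₁.toFun p)) (ξ₁ (PR.pr₁.toFun p)) (η₁.toDual (PR.pr₁.toFun p))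
    (φ₂ (PR.pr₂.toFun p)) (ξ₂ (PR.pr₂.toFun p)) (η₂.toDual (PR.pr₂.toFun p))

theorem morimotoJ_iff (J : EndT P) :
    MorimotoJ PR φ₁ ξ₁ η₁ φ₂ ξ₂ η₂ J ↔ ∀ (p : P.Pt) (v : P.Tp p),
      PR.tangentEquiv p (J p v) = PR.morimotoAt φ₁ ξ₁ η₁ φ₂ ξ₂ η₂ p (PR.tangentEquiv p v) := by
  simp only [MorimotoJ, morimotoAt, tangentEquiv_apply, Module.End.morimoto_apply,
    Form.toDual_apply, Prod.ext_iff]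

theorem morimotoJ_conj_morimotoAt :
    MorimotoJ PR φ₁ ξ₁ η₁ φ₂ ξ₂ η₂
      (fun p => (PR.tangentEquiv p).symm.conj (PR.morimotoAt φ₁ ξ₁ η₁ φ₂ ξ₂ η₂ p)) := by
  rw [morimotoJ_iff]
  intro p v
  simp only [LinearEquiv.conj_apply, LinearMap.comp_apply, LinearEquiv.coe_coe,
    LinearEquiv.symm_symm, LinearEquiv.apply_symm_apply]

variable {φ₁ ξ₁ η₁ φ₂ ξ₂ η₂}

theorem isAlmostComplex_of_morimotoJ (hac₁ : IsAlmostContact M₁ φ₁ ξ₁ η₁)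
    (hac₂ : IsAlmostContact M₂ φ₂ ξ₂ η₂) {J : EndT P} (hJ : MorimotoJ PR φ₁ ξ₁ η₁ φ₂ ξ₂ η₂ J) :
    IsAlmostComplex P J := by
  rw [morimotoJ_iff] at hJ
  intro p v
  apply (PR.tangentEquiv p).injective
  rw [hJ, hJ, map_neg]
  exact ((hac₁.isAlmostContact_at _).morimoto_apply_apply (hac₂.isAlmostContact_at _) _)

end ProductOf

/-- Morimoto; Proposition 2.15 of the paper.  Let `M₁` and
`M₂` be almost contact manifolds with structure tensors `(φ₁, ξ₁, η₁)` and
`(φ₂, ξ₂, η₂)`.  Then the endomorphism field `J` of `T(M₁ × M₂)` defined by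
`J(X, Y) = (φ₁(X) - η₂(Y)ξ₁, φ₂(Y) + η₁(X)ξ₂)` exists, and any such `J`
satisfies `J ∘ J = -id`; hence `M₁ × M₂` admits an almost complex structure
induced by the almost contact structures of `M₁` and `M₂`. -/
theorem morimoto_almost_complex_structure_on_product
    (M₁ M₂ : Mfld)
    (φ₁ : EndT M₁) (ξ₁ : VF M₁) (η₁ : Form M₁ 1)
    (φ₂ : EndT M₂) (ξ₂ : VF M₂) (η₂ : Form M₂ 1)
    (hac₁ : IsAlmostContact M₁ φ₁ ξ₁ η₁)
    (hac₂ : IsAlmostContact M₂ φ₂ ξ₂ η₂)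
    (P : Mfld) (PR : ProductOf P M₁ M₂) :
    (∃ J : EndT P, MorimotoJ PR φ₁ ξ₁ η₁ φ₂ ξ₂ η₂ J) ∧
    ∀ J : EndT P, MorimotoJ PR φ₁ ξ₁ η₁ φ₂ ξ₂ η₂ J → IsAlmostComplex P J :=
  ⟨⟨_, PR.morimotoJ_conj_morimotoAt φ₁ ξ₁ η₁ φ₂ ξ₂ η₂⟩,
    fun _ hJ => PR.isAlmostComplex_of_morimotoJ hac₁ hac₂ hJ⟩

end Paper
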